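/- arXiv:1309.3408 — 7 statements merged into one kernel-verified Lean document; each statement's English description precedes it below -/
import Mathlib

section
/- Let p ≥ 0, q ≥ 1, s ≥ 1 be integers and define the sequence (f_n) by f_0 = s and f_n = p·f_{n-1} + q·∑_{k=0}^{n-1} f_k·f_{n-k-1} for n ≥ 1. Let r = 1/(p + 2qs + 2√((p+qs)qs)) and λ = √(rs/q). Then for every m ≥ 0 the partial sum S_m = ∑_{n=1}^{m} f_{n-1}·r^n satisfies S_m ≤ λ. -/
/-!
With `a n = f n * r ^ (n + 1)` the recurrence reads `a (n + 1) = p r a n + q ∑ a k a (n - k)`,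
and dominating the convolution by the full square gives `S (m + 1) ≤ s r + p r S m + q (S m) ^ 2`
for the partial sums. The choice of `r` makes `λ` a fixed point of the right-hand side
(`q λ ^ 2 = r s` and `2 q λ = 1 - p r`), which is monotone on `S ≥ 0`, so `S m ≤ λ` propagates.
-/

open Finset

theorem sum_range_sum_range_mul_sub_le_sq {R : Type*} [CommSemiring R] [PartialOrder R]
    [IsOrderedRing R] {a : ℕ → R} (ha : ∀ n, 0 ≤ a n) (m : ℕ) :
    ∑ n ∈ range m, ∑ k ∈ range (n + 1), a k * a (n - k) ≤ (∑ n ∈ range m, a n) ^ 2 := by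
  have hreindex : ∑ n ∈ range m, ∑ k ∈ range (n + 1), a k * a (n - k)
      = ∑ k ∈ range m, ∑ j ∈ range (m - k), a k * a j := by
    conv_lhs => simp only [range_eq_Ico]
    rw [← sum_Ico_Ico_comm, range_eq_Ico]
    refine sum_congr rfl fun k _ => ?_
    rw [sum_Ico_eq_sum_range]
    simp only [Nat.add_sub_cancel_left]
  rw [hreindex, sq, sum_mul_sum]
  gcongr with k
  · exact fun j _ _ => mul_nonneg (ha k) (ha j)
  · exact Nat.sub_le m k

theorem sum_range_le_of_le_conv {R : Type*} [CommSemiring R] [PartialOrder R] [IsOrderedRing R]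
    {a : ℕ → R} {c α β L : R} (ha : ∀ n, 0 ≤ a n) (hα : 0 ≤ α)
    (hβ : 0 ≤ β) (hL : 0 ≤ L) (h0 : a 0 ≤ c)
    (hstep : ∀ n, a (n + 1) ≤ α * a n + β * ∑ k ∈ range (n + 1), a k * a (n - k))
    (hfix : c + α * L + β * L ^ 2 ≤ L) (m : ℕ) :
    ∑ n ∈ range m, a n ≤ L := by
  induction m with
  | zero => simpa using hL
  | succ m ih =>
    have hS : 0 ≤ ∑ n ∈ range m, a n := sum_nonneg fun n _ => ha n
    calc ∑ n ∈ range (m + 1), a n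
        ≤ c + α * ∑ n ∈ range m, a n
            + β * ∑ n ∈ range m, ∑ k ∈ range (n + 1), a k * a (n - k) := by
          rw [sum_range_succ', mul_sum, mul_sum, add_comm, add_assoc, ← sum_add_distrib]
          exact add_le_add h0 (sum_le_sum fun n _ => hstep n)
      _ ≤ c + α * ∑ n ∈ range m, a n + β * (∑ n ∈ range m, a n) ^ 2 := by
          gcongr
          exact sum_range_sum_range_mul_sub_le_sq ha m
      _ ≤ c + α * L + β * L ^ 2 := by gcongr
      _ ≤ L := hfix

theorem mul_pow_succ_of_recurrence {R : Type*} [CommSemiring R] {f : ℕ → R} {p q : R}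
    (hf : ∀ n, f (n + 1) = p * f n + q * ∑ k ∈ range (n + 1), f k * f (n - k)) (r : R) (n : ℕ) :
    f (n + 1) * r ^ (n + 1 + 1) = p * r * (f n * r ^ (n + 1))
      + q * ∑ k ∈ range (n + 1), (f k * r ^ (k + 1)) * (f (n - k) * r ^ (n - k + 1)) := by
  have hpow : ∀ k ∈ range (n + 1),
      (f k * r ^ (k + 1)) * (f (n - k) * r ^ (n - k + 1)) = f k * f (n - k) * r ^ (n + 2) := by
    intro k hk
    rw [show n + 2 = (k + 1) + (n - k + 1) by grind, pow_add]
    ring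
  rw [sum_congr rfl hpow, ← sum_mul, hf]
  ring

theorem sqrt_mul_div_eq_of_eq_inv {p q s r : ℝ} (hp : 0 ≤ p) (hq : 0 < q) (hs : 0 < s)
    (hr : r = 1 / (p + 2 * q * s + 2 * √((p + q * s) * q * s))) :
    √(r * s / q) = (1 - p * r) / (2 * q) := by
  set t := √((p + q * s) * q * s)
  have ht : t ^ 2 = (p + q * s) * q * s := Real.sq_sqrt (by positivity)
  have hD : 0 < p + 2 * q * s + 2 * t := by positivity
  have hrD : r * (p + 2 * q * s + 2 * t) = 1 := by rw [hr]; field_simp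
  have h1pr : 1 - p * r = r * (2 * q * s + 2 * t) := by linear_combination -hrD
  have hsq : (1 - p * r) ^ 2 = 4 * q * s * r := by
    rw [h1pr]
    linear_combination (4 * r ^ 2) * ht + (4 * q * s * r) * hrD
  have hr0 : 0 ≤ r := by rw [hr]; positivity
  rw [show r * s / q = ((1 - p * r) / (2 * q)) ^ 2 by rw [div_pow, hsq]; field_simp; ring]
  exact Real.sqrt_sq (by rw [h1pr]; positivity)

theorem stmt_2 (p q s : ℕ) (hq : 1 ≤ q) (hs : 1 ≤ s)
    (f : ℕ → ℕ) (hf0 : f 0 = s)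
    (hf : ∀ n : ℕ, f (n + 1) = p * f n + q * ∑ k ∈ Finset.range (n + 1), f k * f (n - k))
    (r lam : ℝ)
    (hr : r = 1 / ((p : ℝ) + 2 * q * s + 2 * Real.sqrt (((p : ℝ) + q * s) * q * s)))
    (hlam : lam = Real.sqrt (r * s / q)) :
    ∀ m : ℕ, ∑ n ∈ Finset.range m, (f n : ℝ) * r ^ (n + 1) ≤ lam := by
  have hq0 : (0 : ℝ) < q := by exact_mod_cast hq
  have hs0 : (0 : ℝ) < s := by exact_mod_cast hs
  have hr0 : 0 ≤ r := by rw [hr]; positivity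
  have hlin : 2 * q * lam = 1 - p * r := by
    rw [hlam, sqrt_mul_div_eq_of_eq_inv (Nat.cast_nonneg p) hq0 hs0 hr]
    field_simp
  have hquad : q * lam ^ 2 = r * s := by
    rw [hlam, Real.sq_sqrt (by positivity)]
    field_simp
  have hfR : ∀ n, (f (n + 1) : ℝ) = p * f n + q * ∑ k ∈ range (n + 1), (f k : ℝ) * f (n - k) := by
    intro n
    exact_mod_cast hf n
  refine sum_range_le_of_le_conv (c := s * r)
    (fun n => mul_nonneg (Nat.cast_nonneg _) (pow_nonneg hr0 _)) (mul_nonneg (Nat.cast_nonneg p) hr0) hq0.le (by rw [hlam]; positivity) (by simp [hf0])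
    (fun n => (mul_pow_succ_of_recurrence (f := fun n => (f n : ℝ)) hfR r n).le)
    (le_of_eq (by linear_combination lam * hlin - hquad))
end

section
/- Let p ≥ 0, q ≥ 1, s ≥ 1 be integers, define (f_n) by f_0 = s and f_n = p·f_{n-1} + q·∑_{k=0}^{n-1} f_k·f_{n-k-1}, and let r = 1/(p + 2qs + 2√((p+qs)qs)). Then the series ∑_{n=1}^{∞} f_{n-1}·r^n converges and its sum equals (1 - p·r)/(2q) = √(r·s/q). -/
open Finset

private lemma tri_le (a : ℕ → ℝ) (ha : ∀ n, 0 ≤ a n) (N : ℕ) :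
    ∑ m ∈ Finset.range N, ∑ k ∈ Finset.range (m + 1), a k * a (m - k)
      ≤ (∑ i ∈ Finset.range N, a i) ^ 2 := by
  have heq : ∑ m ∈ Finset.range N, ∑ k ∈ Finset.range (m + 1), a k * a (m - k)
      = ∑ x ∈ (Finset.range N ×ˢ Finset.range N).filter (fun x => x.1 + x.2 < N),
          a x.1 * a x.2 := by
    rw [Finset.sum_sigma']
    refine Finset.sum_nbij' (fun x => (x.2, x.1 - x.2)) (fun x => ⟨x.1 + x.2, x.1⟩)
      ?_ ?_ ?_ ?_ ?_
    · rintro ⟨m, k⟩ hmk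
      simp only [Finset.mem_sigma, Finset.mem_range] at hmk
      simp only [Finset.mem_filter, Finset.mem_product, Finset.mem_range]
      omega
    · rintro ⟨i, j⟩ hij
      simp only [Finset.mem_filter, Finset.mem_product, Finset.mem_range] at hij
      simp only [Finset.mem_sigma, Finset.mem_range]
      omega
    · rintro ⟨m, k⟩ hmk
      simp only [Finset.mem_sigma, Finset.mem_range] at hmk
      have hk : k ≤ m := Nat.lt_succ_iff.mp hmk.2
      have : k + (m - k) = m := by omega
      simp only [Sigma.mk.inj_iff]
      exact ⟨this, HEq.rfl⟩
    · rintro ⟨i, j⟩ hij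
      simp
    · rintro ⟨m, k⟩ hmk
      rfl
  rw [heq, sq, Finset.sum_mul_sum, ← Finset.sum_product']
  refine Finset.sum_le_sum_of_subset_of_nonneg (Finset.filter_subset _ _) ?_
  intro i _ _
  exact mul_nonneg (ha _) (ha _)

theorem stmt_3 (p q s : ℕ) (hq : 1 ≤ q) (hs : 1 ≤ s)
    (f : ℕ → ℕ) (hf0 : f 0 = s)
    (hf : ∀ n : ℕ, f (n + 1) = p * f n + q * ∑ k ∈ Finset.range (n + 1), f k * f (n - k))
    (r : ℝ)
    (hr : r = 1 / ((p : ℝ) + 2 * q * s + 2 * Real.sqrt (((p : ℝ) + q * s) * q * s))) :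
    Summable (fun n : ℕ => (f n : ℝ) * r ^ (n + 1)) ∧
    (∑' n : ℕ, (f n : ℝ) * r ^ (n + 1)) = (1 - (p : ℝ) * r) / (2 * q) ∧
    (1 - (p : ℝ) * r) / (2 * q) = Real.sqrt (r * s / q) := by
  have hq1 : (1:ℝ) ≤ (q:ℝ) := by exact_mod_cast hq
  have hs1 : (1:ℝ) ≤ (s:ℝ) := by exact_mod_cast hs
  have hp0 : (0:ℝ) ≤ (p:ℝ) := Nat.cast_nonneg p
  obtain ⟨A, hAdef⟩ : ∃ A : ℝ, A = Real.sqrt (((p : ℝ) + q * s) * q * s) := ⟨_, rfl⟩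
  have hA0 : 0 ≤ A := hAdef ▸ Real.sqrt_nonneg _
  have hAsq : A ^ 2 = ((p : ℝ) + q * s) * q * s := by
    rw [hAdef]; exact Real.sq_sqrt (by positivity)
  obtain ⟨D, hDdef⟩ : ∃ D : ℝ, D = (p : ℝ) + 2 * q * s + 2 * A := ⟨_, rfl⟩
  have hrD' : r = 1 / D := by rw [hr, hDdef, hAdef]
  have hD0 : 0 < D := by rw [hDdef]; nlinarith [hA0, hq1, hs1, hp0]
  have hr0 : 0 < r := by rw [hrD']; exact one_div_pos.mpr hD0
  have hrD : D * r = 1 := by rw [hrD']; field_simp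
  have h1pr : 1 - (p:ℝ) * r = (2 * q * s + 2 * A) * r := by
    linear_combination -hrD + r * hDdef
  have h1pr0 : 0 < 1 - (p:ℝ) * r := by
    rw [h1pr]
    have : 0 < 2 * (q:ℝ) * s + 2 * A := by nlinarith [hA0, hq1, hs1]
    positivity
  have key : (1 - (p:ℝ) * r) ^ 2 = 4 * q * s * r := by
    have h1 : (D - p) ^ 2 = 4 * q * s * D := by
      rw [hDdef]; linear_combination 4 * hAsq
    have h2 : 1 - (p:ℝ) * r = (D - p) * r := by linear_combination -hrD
    rw [h2]
    linear_combination r ^ 2 * h1 + 4 * (q:ℝ) * s * r * hrD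
  set L : ℝ := (1 - (p:ℝ) * r) / (2 * q) with hLdef
  have hq0 : (0:ℝ) < q := by linarith
  have hL0 : 0 < L := by rw [hLdef]; positivity
  have h2qL : 2 * q * L = 1 - (p:ℝ) * r := by rw [hLdef]; field_simp
  have hqL2 : (q:ℝ) * L ^ 2 = s * r := by
    have h4 : 4 * (q:ℝ) ^ 2 * L ^ 2 = 4 * q * s * r := by
      rw [← key]; linear_combination (2 * (q:ℝ) * L + (1 - p * r)) * h2qL
    have h5 : (4 * (q:ℝ)) * ((q:ℝ) * L ^ 2) = (4 * (q:ℝ)) * (s * r) := by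
      linear_combination h4
    exact mul_left_cancel₀ (by positivity) h5
  have hquad : (s:ℝ) * r + p * r * L + q * L ^ 2 = L := by
    linear_combination L * h2qL - hqL2
  set g : ℕ → ℝ := fun n => (f n : ℝ) * r ^ (n + 1) with hg
  have hg0 : ∀ n, 0 ≤ g n := fun n => by positivity
  have hgzero : g 0 = s * r := by simp [hg, hf0]
  have hconv : ∀ m, ∑ k ∈ Finset.range (m + 1), g k * g (m - k)
      = (∑ k ∈ Finset.range (m + 1), (f k : ℝ) * f (m - k)) * r ^ (m + 2) := by
    intro m
    rw [Finset.sum_mul]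
    apply Finset.sum_congr rfl
    intro k hk
    have hk' : k ≤ m := Nat.lt_succ_iff.mp (Finset.mem_range.mp hk)
    have hpow : r ^ (k + 1) * r ^ (m - k + 1) = r ^ (m + 2) := by
      rw [← pow_add]; congr 1; omega
    simp only [hg]
    rw [mul_mul_mul_comm, hpow]
  have hgsucc : ∀ m, g (m + 1)
      = p * r * g m + q * ∑ k ∈ Finset.range (m + 1), g k * g (m - k) := by
    intro m
    rw [hconv]
    simp only [hg, hf m]
    push_cast
    ring
  have hbound : ∀ N, ∑ n ∈ Finset.range N, g n ≤ L := by
    intro N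
    induction N with
    | zero => simpa using hL0.le
    | succ N ih =>
      rw [Finset.sum_range_succ']
      have h1 : ∑ m ∈ Finset.range N, g (m + 1)
          = p * r * ∑ m ∈ Finset.range N, g m
            + q * ∑ m ∈ Finset.range N, ∑ k ∈ Finset.range (m + 1), g k * g (m - k) := by
        rw [Finset.mul_sum, Finset.mul_sum, ← Finset.sum_add_distrib]
        exact Finset.sum_congr rfl fun m _ => hgsucc m
      rw [h1, hgzero]
      have htri := tri_le g hg0 N
      have hSN : ∑ m ∈ Finset.range N, g m ≤ L := ih
      have hSN0 : 0 ≤ ∑ m ∈ Finset.range N, g m :=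
        Finset.sum_nonneg fun i _ => hg0 i
      nlinarith [hquad, htri, hSN, hSN0, mul_le_mul hSN hSN hSN0 hL0.le,
        mul_nonneg hp0 hr0.le, hq0]
  have hsum : Summable g := summable_of_sum_range_le hg0 hbound
  refine ⟨hsum, ?_, ?_⟩
  · set S : ℝ := ∑' n, g n with hS
    have hnorm : Summable fun n => ‖g n‖ :=
      hsum.congr fun n => (Real.norm_of_nonneg (hg0 n)).symm
    have hcauchy : (∑' n, g n) * (∑' n, g n)
        = ∑' m, ∑ k ∈ Finset.range (m + 1), g k * g (m - k) :=
      tsum_mul_tsum_eq_tsum_sum_range_of_summable_norm hnorm hnorm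
    have hconvsum : Summable fun m => ∑ k ∈ Finset.range (m + 1), g k * g (m - k) :=
      summable_sum_mul_range_of_summable_norm' hnorm hsum hnorm hsum
    have heq1 : S = g 0 + ∑' m, g (m + 1) := Summable.tsum_eq_zero_add hsum
    have heq2 : ∑' m, g (m + 1) = p * r * S + q * (S * S) := by
      have h6 : ∑' m, g (m + 1)
          = p * r * (∑' m, g m)
            + q * ∑' m, ∑ k ∈ Finset.range (m + 1), g k * g (m - k) := by
        rw [tsum_congr hgsucc,
          Summable.tsum_add (hsum.mul_left _) (hconvsum.mul_left _), tsum_mul_left, tsum_mul_left]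
      rw [h6, ← hcauchy]
    have hSquad : S = s * r + p * r * S + q * (S * S) := by
      rw [hgzero, heq2] at heq1
      linarith [heq1]
    have h7 : (q:ℝ) * (S - L) ^ 2 = 0 := by
      linear_combination -hSquad - S * h2qL + hqL2
    have h8 : (S - L) ^ 2 = 0 := by
      rcases mul_eq_zero.mp h7 with h | h
      · exact absurd h hq0.ne'
      · exact h
    have h9 : S = L := by
      have := pow_eq_zero_iff (two_ne_zero) |>.mp h8
      linarith [sub_eq_zero.mp this]
    exact h9
  · have h1 : r * s / q = L ^ 2 := by
      rw [div_eq_iff hq0.ne']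
      linear_combination -hqL2
    rw [h1, Real.sqrt_sq hL0.le]
end

section
/- Let p ≥ 0, q ≥ 1, s ≥ 1 be integers and r = 1/(p + 2qs + 2√((p+qs)qs)). If p', q'' are integers with 0 ≤ p' ≤ p and 0 ≤ q'' ≤ q, then p'·r + q''·(1 - p·r)/(2q) < 1. -/
theorem stmt_8 (p q s : ℕ) (hq : 1 ≤ q) (hs : 1 ≤ s)
    (r : ℝ)
    (hr : r = 1 / ((p : ℝ) + 2 * q * s + 2 * Real.sqrt (((p : ℝ) + q * s) * q * s)))
    (p' q'' : ℕ) (hp' : p' ≤ p) (hq'' : q'' ≤ q) :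
    (p' : ℝ) * r + (q'' : ℝ) * ((1 - (p : ℝ) * r) / (2 * q)) < 1 := by
  have hq1 : (1:ℝ) ≤ q := by exact_mod_cast hq
  have hs1 : (1:ℝ) ≤ s := by exact_mod_cast hs
  have hsq : 0 ≤ Real.sqrt (((p : ℝ) + q * s) * q * s) := Real.sqrt_nonneg _
  have hp0 : (0:ℝ) ≤ p := Nat.cast_nonneg p
  have hp'le : (p':ℝ) ≤ p := by exact_mod_cast hp'
  have hq''le : (q'':ℝ) ≤ q := by exact_mod_cast hq''
  set D : ℝ := (p : ℝ) + 2 * q * s + 2 * Real.sqrt (((p : ℝ) + q * s) * q * s) with hD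
  have hDgt : (p:ℝ) + 2 ≤ D := by nlinarith
  have hDpos : 0 < D := by linarith
  have hrpos : 0 < r := by rw [hr]; positivity
  have hpr : (p:ℝ) * r < 1 := by
    rw [hr, mul_one_div]
    exact (div_lt_one hDpos).2 (by linarith)
  have hmid : 0 ≤ (1 - (p:ℝ)*r) / (2*q) := by
    apply div_nonneg (by linarith)
    linarith
  calc (p' : ℝ) * r + (q'' : ℝ) * ((1 - (p : ℝ) * r) / (2 * q))
      ≤ (p:ℝ) * r + (q:ℝ) * ((1 - (p : ℝ) * r) / (2 * q)) := by
        gcongr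
    _ = (1 + (p:ℝ)*r)/2 := by field_simp; ring
    _ < 1 := by linarith
end

section
/- Let p ≥ 0, q ≥ 1, s ≥ 1 be integers and r = 1/(p + 2qs + 2√((p+qs)qs)). If p', q', q'' are integers with 0 ≤ p' ≤ p, 0 ≤ q' ≤ q, 0 ≤ q'' ≤ q and (p', q', q'') ≠ (p, q, 0), then p'·r + (2q' - q'')·(1 - p·r)/(2q) < 1. -/
/-!
Put `λ = (1 - p r) / (2q)`, so that `p r + 2q λ = 1` identically. Both weights `r` and `λ` are
positive because the denominator of `r` exceeds `p` by at least `2qs > 0`. The coefficient vector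
`(p', 2q' - q'')` is dominated by `(p, 2q)` and differs from it in some coordinate unless
`(p', q', q'') = (p, q, 0)`, so the weighted sum is strictly below `p r + 2q λ = 1`.
-/

theorem add_mul_lt_add_mul_of_le_of_lt_or {R : Type*} [Semiring R] [PartialOrder R]
    [IsStrictOrderedRing R] {a b x y X Y : R} (ha : 0 < a) (hb : 0 < b) (hx : x ≤ X)
    (hy : y ≤ Y) (hlt : x < X ∨ y < Y) : x * a + y * b < X * a + Y * b := by
  rcases hlt with hx' | hy'
  · exact add_lt_add_of_lt_of_le (mul_lt_mul_of_pos_right hx' ha)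
      (mul_le_mul_of_nonneg_right hy hb.le)
  · exact add_lt_add_of_le_of_lt (mul_le_mul_of_nonneg_right hx ha.le)
      (mul_lt_mul_of_pos_right hy' hb)

theorem mul_one_div_add_lt_one {K : Type*} [Field K] [LinearOrder K] [IsStrictOrderedRing K]
    {p c : K} (hp : 0 ≤ p) (hc : 0 < c) : p * (1 / (p + c)) < 1 := by
  rw [mul_one_div, div_lt_one (by positivity)]
  linarith

theorem stmt_9_general (p q s : ℕ) (hq : 1 ≤ q) (hs : 1 ≤ s)
    (r : ℝ)
    (hr : r = 1 / ((p : ℝ) + 2 * q * s + 2 * Real.sqrt (((p : ℝ) + q * s) * q * s)))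
    (p' q' q'' : ℕ) (hp' : p' ≤ p) (hq' : q' ≤ q)
    (hne : (p', q', q'') ≠ (p, q, 0)) :
    (p' : ℝ) * r + (2 * (q' : ℝ) - (q'' : ℝ)) * ((1 - (p : ℝ) * r) / (2 * q)) < 1 := by
  have hq_pos : (0 : ℝ) < q := by exact_mod_cast hq
  have hs_pos : (0 : ℝ) < s := by exact_mod_cast hs
  have hr_pos : 0 < r := hr ▸ by positivity
  have hpr : (p : ℝ) * r < 1 := by
    rw [hr, add_assoc]
    exact mul_one_div_add_lt_one (Nat.cast_nonneg p) (by positivity)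
  have hlam_pos : 0 < (1 - (p : ℝ) * r) / (2 * q) := div_pos (sub_pos.2 hpr) (by positivity)
  have hp'R : (p' : ℝ) ≤ p := by exact_mod_cast hp'
  have hq'R : (q' : ℝ) ≤ q := by exact_mod_cast hq'
  have hq''_nonneg : (0 : ℝ) ≤ q'' := Nat.cast_nonneg q''
  have hcoeff_le : 2 * (q' : ℝ) - q'' ≤ 2 * q := by linarith
  have hcoeff_lt : (p' : ℝ) < p ∨ 2 * (q' : ℝ) - q'' < 2 * q := by
    have : p' < p ∨ q' < q ∨ 0 < q'' := by
      simp only [ne_eq, Prod.mk.injEq, not_and] at hne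
      omega
    rcases this with h | h | h
    · exact Or.inl (by exact_mod_cast h)
    · exact Or.inr (by linarith [(Nat.cast_lt.2 h : (q' : ℝ) < q)])
    · exact Or.inr (by linarith [(Nat.cast_pos.2 h : (0 : ℝ) < q'')])
  calc _ < (p : ℝ) * r + 2 * q * ((1 - (p : ℝ) * r) / (2 * q)) :=
        add_mul_lt_add_mul_of_le_of_lt_or hr_pos hlam_pos hp'R hcoeff_le hcoeff_lt
    _ = 1 := by rw [mul_div_cancel₀ _ (by positivity)]; ring

theorem stmt_9 (p q s : ℕ) (hq : 1 ≤ q) (hs : 1 ≤ s)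
    (r : ℝ)
    (hr : r = 1 / ((p : ℝ) + 2 * q * s + 2 * Real.sqrt (((p : ℝ) + q * s) * q * s)))
    (p' q' q'' : ℕ) (hp' : p' ≤ p) (hq' : q' ≤ q) (hq''le : q'' ≤ q)
    (hne : (p', q', q'') ≠ (p, q, 0)) :
    (p' : ℝ) * r + (2 * (q' : ℝ) - (q'' : ℝ)) * ((1 - (p : ℝ) * r) / (2 * q)) < 1 :=
  stmt_9_general p q s hq hs r hr p' q' q'' hp' hq' hne
end

section
/- Let (f_n) be a sequence of positive reals such that lim_{n→∞} f_{n-1}/f_n = r for some r ∈ (0,1), ∑_{n=0}^{∞} f_n·r^{n+1} converges, and suppose (u_n), (v_n) satisfy 0 ≤ u_n, v_n ≤ f_n, with lim u_n/f_n = μ_U and lim v_n/f_n = μ_V, and additionally (1 - p·r) = 2q·∑_{k=0}^{∞} f_k·r^{k+1} where f satisfies f_n = p·f_{n-1} + q·∑_{k=0}^{n-1} f_k f_{n-k-1} for n ≥ 1 with integers p ≥ 0, q ≥ 1, f_0 ≥ 1. Define w_n = ∑_{k=0}^{n-1} u_k·v_{n-k-1} (w_0 = 0). Then lim_{n→∞}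 w_n/f_n exists and equals λ_V·μ_U + λ_U·μ_V, where λ_U = ∑ u_n r^{n+1} and λ_V = ∑ v_n r^{n+1}. -/
/-!
Cut the convolution `∑ a_k b_{n-k}` at a fixed `M` into a head `k < M`, a tail `k > n - M` and
a middle. As `f_{n-k} / f_{n+1} → r^{k+1}`, the head divided by `f_{n+1}` tends to
`μ_b ∑_{k<M} a_k r^{k+1}`, and the tail symmetrically. The middle lies between `0` and the middle
of the self-convolution of `f`; by the recurrence the whole self-convolution divided by `f_{n+1}`
is `(1 - p f_n / f_{n+1}) / q → (1 - p r) / q = 2L`, so that middle tends to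
`2L - 2 ∑_{k<M} f_k r^{k+1}`, which vanishes as `M → ∞`.
-/

open Filter Topology Finset

theorem sum_range_succ_mul_sub_eq_head_add_middle_add_tail {R : Type*} [CommSemiring R]
    (a b : ℕ → R) {M n : ℕ} (h : 2 * M ≤ n + 1) :
    ∑ k ∈ range (n + 1), a k * b (n - k) =
      ∑ k ∈ range M, a k * b (n - k) + ∑ k ∈ Ico M (n + 1 - M), a k * b (n - k) +
        ∑ k ∈ range M, b k * a (n - k) := by
  have tail :
      ∑ k ∈ Ico (n + 1 - M) (n + 1), a k * b (n - k) = ∑ k ∈ range M, b k * a (n - k) := by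
    have reflect := sum_Ico_reflect (fun j => a j * b (n - j)) 0 (by omega : M ≤ n + 1)
    rw [Nat.sub_zero, Nat.Ico_zero_eq_range] at reflect
    rw [← reflect]
    refine sum_congr rfl fun k hk => ?_
    rw [Nat.sub_sub_self (by have := mem_range.1 hk; omega), mul_comm]
  rw [← tail, sum_range_add_sum_Ico _ (by omega : M ≤ n + 1 - M),
    sum_range_add_sum_Ico _ (by omega : n + 1 - M ≤ n + 1)]

theorem tendsto_div_sub_div_succ_pow {f : ℕ → ℝ} {r : ℝ} (hf : ∀ n, f n ≠ 0)
    (hratio : Tendsto (fun n => f n / f (n + 1)) atTop (𝓝 r)) (k : ℕ) :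
    Tendsto (fun n => f (n - k) / f (n + 1)) atTop (𝓝 (r ^ (k + 1))) := by
  induction k with
  | zero => simpa using hratio
  | succ k ih =>
    have step : Tendsto (fun n => f (n - (k + 1)) / f (n - k)) atTop (𝓝 r) := by
      refine (hratio.comp (tendsto_sub_atTop_nat (k + 1))).congr' ?_
      filter_upwards [eventually_ge_atTop (k + 1)] with n hn
      simp [show n - (k + 1) + 1 = n - k by omega]
    rw [pow_succ']
    exact (step.mul ih).congr fun n => div_mul_div_cancel₀ (hf (n - k))

theorem tendsto_sum_range_mul_sub_div_succ {f b : ℕ → ℝ} {r μ : ℝ} (hf : ∀ n, f n ≠ 0)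
    (hratio : Tendsto (fun n => f n / f (n + 1)) atTop (𝓝 r))
    (hb : Tendsto (fun n => b n / f n) atTop (𝓝 μ)) (a : ℕ → ℝ) (M : ℕ) :
    Tendsto (fun n => (∑ k ∈ range M, a k * b (n - k)) / f (n + 1)) atTop
      (𝓝 (μ * ∑ k ∈ range M, a k * r ^ (k + 1))) := by
  simp only [sum_div, mul_sum]
  refine tendsto_finsetSum _ fun k _ => ?_
  have hbk := (hb.comp (tendsto_sub_atTop_nat k)).mul (tendsto_div_sub_div_succ_pow hf hratio k)
  rw [mul_left_comm]
  refine (hbk.const_mul (a k)).congr fun n => ?_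
  simp only [Function.comp, div_mul_div_cancel₀ (hf (n - k)), mul_div_assoc]

theorem tendsto_of_sandwich_approx {ι α β : Type*} [TopologicalSpace β] [LinearOrder β]
    [OrderTopology β] [AddZeroClass β] [ContinuousAdd β] {l : Filter α} {l' : Filter ι}
    [l'.NeBot] {x : α → β} {h e : ι → α → β} {H E : ι → β} {c : β}
    (hx : ∀ i, ∀ᶠ n in l, h i n ≤ x n ∧ x n ≤ h i n + e i n)
    (hh : ∀ i, Tendsto (h i) l (𝓝 (H i))) (he : ∀ i, Tendsto (e i) l (𝓝 (E i)))
    (hH : Tendsto H l' (𝓝 c)) (hE : Tendsto E l' (𝓝 0)) : Tendsto x l (𝓝 c) := by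
  rw [tendsto_order]
  constructor
  · intro a ha
    obtain ⟨i, hi⟩ := (hH.eventually (lt_mem_nhds ha)).exists
    filter_upwards [hx i, (hh i).eventually (lt_mem_nhds hi)] with n hn hlt
    exact hlt.trans_le hn.1
  · intro a ha
    have hHE : Tendsto (fun i => H i + E i) l' (𝓝 c) := by simpa using hH.add hE
    obtain ⟨i, hi⟩ := (hHE.eventually (gt_mem_nhds ha)).exists
    filter_upwards [hx i, ((hh i).add (he i)).eventually (gt_mem_nhds hi)] with n hn hlt
    exact hn.2.trans_lt hlt

theorem tendsto_convolution_div_succ {f a b : ℕ → ℝ} {r μa μb ℓa ℓb L : ℝ}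
    (hf : ∀ n, 0 < f n) (ha : ∀ n, 0 ≤ a n ∧ a n ≤ f n) (hb : ∀ n, 0 ≤ b n ∧ b n ≤ f n)
    (hratio : Tendsto (fun n => f n / f (n + 1)) atTop (𝓝 r))
    (hμa : Tendsto (fun n => a n / f n) atTop (𝓝 μa))
    (hμb : Tendsto (fun n => b n / f n) atTop (𝓝 μb))
    (hℓa : HasSum (fun n => a n * r ^ (n + 1)) ℓa) (hℓb : HasSum (fun n => b n * r ^ (n + 1)) ℓb)
    (hL : HasSum (fun n => f n * r ^ (n + 1)) L)
    (hff : Tendsto (fun n => (∑ k ∈ range (n + 1), f k * f (n - k)) / f (n + 1)) atTop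
      (𝓝 (2 * L))) :
    Tendsto (fun n => (∑ k ∈ range (n + 1), a k * b (n - k)) / f (n + 1)) atTop
      (𝓝 (ℓb * μa + ℓa * μb)) := by
  have hf0 : ∀ n, f n ≠ 0 := fun n => (hf n).ne'
  have hμf : Tendsto (fun n => f n / f n) atTop (𝓝 1) :=
    tendsto_const_nhds.congr fun n => (div_self (hf0 n)).symm
  refine tendsto_of_sandwich_approx (l' := atTop)
    (h := fun M n => (∑ k ∈ range M, a k * b (n - k)) / f (n + 1) +
      (∑ k ∈ range M, b k * a (n - k)) / f (n + 1))
    (e := fun M n => (∑ k ∈ range (n + 1), f k * f (n - k)) / f (n + 1) -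
      2 * ((∑ k ∈ range M, f k * f (n - k)) / f (n + 1)))
    (fun M => ?_)
    (fun M => (tendsto_sum_range_mul_sub_div_succ hf0 hratio hμb a M).add
      (tendsto_sum_range_mul_sub_div_succ hf0 hratio hμa b M))
    (fun M => hff.sub ((tendsto_sum_range_mul_sub_div_succ hf0 hratio hμf f M).const_mul 2))
    ?_ ?_
  · filter_upwards [eventually_ge_atTop (2 * M)] with n hn
    rw [sum_range_succ_mul_sub_eq_head_add_middle_add_tail a b (by omega : 2 * M ≤ n + 1),
      sum_range_succ_mul_sub_eq_head_add_middle_add_tail f f (by omega : 2 * M ≤ n + 1)]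
    have hmid_nonneg : 0 ≤ ∑ k ∈ Ico M (n + 1 - M), a k * b (n - k) :=
      sum_nonneg fun k _ => mul_nonneg (ha k).1 (hb _).1
    have hmid_le : ∑ k ∈ Ico M (n + 1 - M), a k * b (n - k) ≤
        ∑ k ∈ Ico M (n + 1 - M), f k * f (n - k) :=
      sum_le_sum fun k _ => mul_le_mul (ha k).2 (hb _).2 (hb _).1 (hf k).le
    have hfn := hf (n + 1)
    constructor
    · rw [← add_div, div_le_div_iff_of_pos_right hfn]
      linarith
    · field_simp
      linarith
  · convert (hℓa.tendsto_sum_nat.const_mul μb).add (hℓb.tendsto_sum_nat.const_mul μa) using 2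
    ring
  · convert (hL.tendsto_sum_nat.const_mul 1).const_mul 2 |>.const_sub (2 * L) using 2
    ring

theorem tendsto_sum_mul_self_div_succ_of_rec {f : ℕ → ℝ} {p q r L : ℝ} (hq : q ≠ 0)
    (hf : ∀ n, f n ≠ 0)
    (hfrec : ∀ n, f (n + 1) = p * f n + q * ∑ k ∈ range (n + 1), f k * f (n - k))
    (hratio : Tendsto (fun n => f n / f (n + 1)) atTop (𝓝 r)) (hgen : 1 - p * r = 2 * q * L) :
    Tendsto (fun n => (∑ k ∈ range (n + 1), f k * f (n - k)) / f (n + 1)) atTop (𝓝 (2 * L)) := by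
  have hlim : Tendsto (fun n => (1 - p * (f n / f (n + 1))) / q) atTop (𝓝 ((1 - p * r) / q)) :=
    (tendsto_const_nhds.sub (hratio.const_mul p)).div_const q
  rw [hgen, mul_right_comm, mul_div_cancel_right₀ _ hq] at hlim
  refine hlim.congr fun n => ?_
  field_simp [hf (n + 1)]
  linear_combination hfrec n

theorem stmt_12_general (p q : ℕ) (hq : 1 ≤ q)
    (f : ℕ → ℝ) (hfpos : ∀ n, 0 < f n)
    (hfrec : ∀ n : ℕ, f (n + 1) = p * f n + q * ∑ k ∈ Finset.range (n + 1), f k * f (n - k))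
    (r : ℝ) (hr : r ∈ Set.Ioo (0 : ℝ) 1)
    (hratio : Tendsto (fun n : ℕ => f n / f (n + 1)) atTop (nhds r))
    (hsum : Summable (fun n : ℕ => f n * r ^ (n + 1)))
    (hgen : 1 - (p : ℝ) * r = 2 * q * ∑' k : ℕ, f k * r ^ (k + 1))
    (u v : ℕ → ℝ)
    (hu : ∀ n, 0 ≤ u n ∧ u n ≤ f n) (hv : ∀ n, 0 ≤ v n ∧ v n ≤ f n)
    (muU muV : ℝ)
    (hmuU : Tendsto (fun n : ℕ => u n / f n) atTop (nhds muU))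
    (hmuV : Tendsto (fun n : ℕ => v n / f n) atTop (nhds muV))
    (w : ℕ → ℝ)
    (hw : ∀ n : ℕ, w (n + 1) = ∑ k ∈ Finset.range (n + 1), u k * v (n - k)) :
    Tendsto (fun n : ℕ => w n / f n) atTop
      (nhds ((∑' n : ℕ, v n * r ^ (n + 1)) * muU + (∑' n : ℕ, u n * r ^ (n + 1)) * muV)) := by
  have hf : ∀ n, f n ≠ 0 := fun n => (hfpos n).ne'
  have hpow : ∀ n, 0 ≤ r ^ (n + 1) := fun n => pow_nonneg hr.1.le _
  have hsummable : ∀ g : ℕ → ℝ, (∀ n, 0 ≤ g n ∧ g n ≤ f n) →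
      Summable (fun n => g n * r ^ (n + 1)) := fun g hg =>
    hsum.of_nonneg_of_le (fun n => mul_nonneg (hg n).1 (hpow n))
      fun n => mul_le_mul_of_nonneg_right (hg n).2 (hpow n)
  have hff :=
    tendsto_sum_mul_self_div_succ_of_rec (Nat.cast_ne_zero.2 (by omega)) hf hfrec hratio hgen
  rw [← tendsto_add_atTop_iff_nat 1]
  simp only [hw]
  exact tendsto_convolution_div_succ hfpos hu hv hratio hmuU hmuV (hsummable u hu).hasSum
    (hsummable v hv).hasSum hsum.hasSum hff

theorem stmt_12 (p q : ℕ) (hq : 1 ≤ q)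
    (f : ℕ → ℝ) (hfpos : ∀ n, 0 < f n) (hf0 : 1 ≤ f 0)
    (hfrec : ∀ n : ℕ, f (n + 1) = p * f n + q * ∑ k ∈ Finset.range (n + 1), f k * f (n - k))
    (r : ℝ) (hr : r ∈ Set.Ioo (0 : ℝ) 1)
    (hratio : Tendsto (fun n : ℕ => f n / f (n + 1)) atTop (nhds r))
    (hsum : Summable (fun n : ℕ => f n * r ^ (n + 1)))
    (hgen : 1 - (p : ℝ) * r = 2 * q * ∑' k : ℕ, f k * r ^ (k + 1))
    (u v : ℕ → ℝ)
    (hu : ∀ n, 0 ≤ u n ∧ u n ≤ f n) (hv : ∀ n, 0 ≤ v n ∧ v n ≤ f n)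
    (muU muV : ℝ)
    (hmuU : Tendsto (fun n : ℕ => u n / f n) atTop (nhds muU))
    (hmuV : Tendsto (fun n : ℕ => v n / f n) atTop (nhds muV))
    (w : ℕ → ℝ) (hw0 : w 0 = 0)
    (hw : ∀ n : ℕ, w (n + 1) = ∑ k ∈ Finset.range (n + 1), u k * v (n - k)) :
    Tendsto (fun n : ℕ => w n / f n) atTop
      (nhds ((∑' n : ℕ, v n * r ^ (n + 1)) * muU + (∑' n : ℕ, u n * r ^ (n + 1)) * muV)) :=
  stmt_12_general p q hq f hfpos hfrec r hr hratio hsum hgen u v hu hv muU muV hmuU hmuV w hw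
end

section
/- Let (f_n) be a sequence of positive reals with lim f_{n-k}/f_n = r^k for every fixed k ≥ 1 (with r ∈ (0,1)), and let (u_n), (w_n) satisfy 0 ≤ u_n, w_n ≤ f_n, w_0 = u_0, w_1 = u_1 + p'·w_0, and w_n = u_n + p'·w_{n-1} + q'·w_{n-2} for n ≥ 2, where p', q' ≥ 0 are reals with p'·r + q'·r² < 1. If lim u_n/f_n = μ_U exists, then lim w_n/f_n exists and equals μ_U/(1 - p'·r - q'·r²). -/
open Filter

lemma aux_decay_13 (g : ℕ → ℝ) (hg0 : ∀ n, 0 ≤ g n) (M : ℝ) (hgM : ∀ n, g n ≤ M)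
    (c : ℝ) (hc0 : 0 ≤ c) (hc1 : c < 1)
    (h : ∀ ε : ℝ, 0 < ε → ∃ N, ∀ n, N ≤ n → g n ≤ ε + c * max (g (n - 1)) (g (n - 2))) :
    Tendsto g atTop (nhds 0) := by
  have hM0 : 0 ≤ M := le_trans (hg0 0) (hgM 0)
  have hD : 0 < 1 - c := by linarith
  rw [Metric.tendsto_atTop]
  intro δ hδ
  set ε := δ * (1 - c) / 2 with hε
  have hεpos : 0 < ε := by positivity
  obtain ⟨N, hN⟩ := h ε hεpos
  have key : ∀ k : ℕ, ∀ n, N + 2 * k ≤ n → g n ≤ ε / (1 - c) + c ^ k * M := by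
    intro k
    induction k with
    | zero =>
      intro n hn
      have : g n ≤ M := hgM n
      have hε' : 0 ≤ ε / (1 - c) := by positivity
      simpa using by linarith
    | succ k ih =>
      intro n hn
      have h1 : N ≤ n := by omega
      have hn1 : N + 2 * k ≤ n - 1 := by omega
      have hn2 : N + 2 * k ≤ n - 2 := by omega
      have b1 := ih _ hn1
      have b2 := ih _ hn2
      have hmax : max (g (n - 1)) (g (n - 2)) ≤ ε / (1 - c) + c ^ k * M := max_le b1 b2
      have heq : ε + c * (ε / (1 - c) + c ^ k * M) = ε / (1 - c) + c ^ (k + 1) * M := by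
        field_simp
        ring
      calc g n ≤ ε + c * max (g (n - 1)) (g (n - 2)) := hN n h1
        _ ≤ ε + c * (ε / (1 - c) + c ^ k * M) := by gcongr
        _ = ε / (1 - c) + c ^ (k + 1) * M := heq
  have hck : Tendsto (fun k : ℕ => c ^ k * M) atTop (nhds 0) := by
    simpa using (tendsto_pow_atTop_nhds_zero_of_lt_one hc0 hc1).mul_const M
  obtain ⟨k, hk⟩ := Metric.tendsto_atTop.1 hck (δ / 2) (by linarith)
  refine ⟨N + 2 * k, fun n hn => ?_⟩
  have h1 := key k n hn
  have h2 := hk k le_rfl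
  rw [Real.dist_eq, sub_zero] at h2 ⊢
  have hεc : ε / (1 - c) = δ / 2 := by
    rw [hε]; field_simp
  have h3 : |c ^ k * M| = c ^ k * M := abs_of_nonneg (by positivity)
  rw [h3] at h2
  rw [abs_of_nonneg (hg0 n)]
  linarith

theorem stmt_13 (f : ℕ → ℝ) (hfpos : ∀ n, 0 < f n)
    (r : ℝ) (hr : r ∈ Set.Ioo (0 : ℝ) 1)
    (hratio : ∀ k : ℕ, 1 ≤ k →
      Tendsto (fun n : ℕ => f (n - k) / f n) atTop (nhds (r ^ k)))
    (u w : ℕ → ℝ)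
    (hu : ∀ n, 0 ≤ u n ∧ u n ≤ f n) (hwb : ∀ n, 0 ≤ w n ∧ w n ≤ f n)
    (p' q' : ℝ) (hp' : 0 ≤ p') (hq' : 0 ≤ q')
    (hdenom : p' * r + q' * r ^ 2 < 1)
    (hw0 : w 0 = u 0) (hw1 : w 1 = u 1 + p' * w 0)
    (hwrec : ∀ n : ℕ, 2 ≤ n → w n = u n + p' * w (n - 1) + q' * w (n - 2))
    (muU : ℝ)
    (hmuU : Tendsto (fun n : ℕ => u n / f n) atTop (nhds muU)) :
    Tendsto (fun n : ℕ => w n / f n) atTop (nhds (muU / (1 - p' * r - q' * r ^ 2))) := by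
  obtain ⟨hr0, hr1⟩ := hr
  set c : ℝ := p' * r + q' * r ^ 2 with hcdef
  have hc0 : 0 ≤ c := by positivity
  have hD : 0 < 1 - c := by linarith
  set L : ℝ := muU / (1 - c) with hLdef
  set x : ℕ → ℝ := fun n => w n / f n with hxdef
  set a : ℕ → ℝ := fun n => u n / f n with hadef
  set b1 : ℕ → ℝ := fun n => f (n - 1) / f n with hb1def
  set b2 : ℕ → ℝ := fun n => f (n - 2) / f n with hb2def
  have hb1 : Tendsto b1 atTop (nhds r) := by simpa using hratio 1 le_rfl
  have hb2 : Tendsto b2 atTop (nhds (r ^ 2)) := hratio 2 (by norm_num)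
  have hx0 : ∀ n, 0 ≤ x n := fun n => div_nonneg (hwb n).1 (hfpos n).le
  have hx1 : ∀ n, x n ≤ 1 := fun n => by
    rw [hxdef]
    exact div_le_one_of_le₀ (hwb n).2 (hfpos n).le
  have hb1nn : ∀ n, 0 ≤ b1 n := fun n => div_nonneg (hfpos _).le (hfpos _).le
  have hb2nn : ∀ n, 0 ≤ b2 n := fun n => div_nonneg (hfpos _).le (hfpos _).le
  have hxrec : ∀ n, 2 ≤ n → x n = a n + p' * b1 n * x (n - 1) + q' * b2 n * x (n - 2) := by
    intro n hn
    have h1 := (hfpos n).ne'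
    have h2 := (hfpos (n - 1)).ne'
    have h3 := (hfpos (n - 2)).ne'
    simp only [hxdef, hadef, hb1def, hb2def]
    rw [hwrec n hn]
    field_simp
  have hmuL : muU = (1 - c) * L := by
    rw [hLdef]
    field_simp
  set g : ℕ → ℝ := fun n => |x n - L| with hgdef
  have hg0 : ∀ n, 0 ≤ g n := fun n => abs_nonneg _
  have hgM : ∀ n, g n ≤ 1 + |L| := by
    intro n
    calc g n ≤ |x n| + |L| := abs_sub _ _
      _ ≤ 1 + |L| := by
          have := abs_of_nonneg (hx0 n)
          have := hx1 n
          gcongr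
          rw [abs_of_nonneg (hx0 n)]
          exact hx1 n
  -- the contraction constant
  set c' : ℝ := (1 + c) / 2 with hc'def
  have hc'0 : 0 ≤ c' := by positivity
  have hc'1 : c' < 1 := by rw [hc'def]; linarith
  have hcc' : c < c' := by rw [hc'def]; linarith
  have hgkey : ∀ ε : ℝ, 0 < ε → ∃ N, ∀ n, N ≤ n →
      g n ≤ ε + c' * max (g (n - 1)) (g (n - 2)) := by
    intro ε hε
    -- eventual smallness of error terms
    have hA : Tendsto (fun n => |a n - muU|) atTop (nhds 0) := by
      have := tendsto_iff_norm_sub_tendsto_zero.mp hmuU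
      simpa [Real.norm_eq_abs] using this
    have hB : Tendsto (fun n => (p' * |b1 n - r| + q' * |b2 n - r ^ 2|) * |L|) atTop
        (nhds 0) := by
      have h1 : Tendsto (fun n => |b1 n - r|) atTop (nhds 0) := by
        have := tendsto_iff_norm_sub_tendsto_zero.mp hb1
        simpa [Real.norm_eq_abs] using this
      have h2 : Tendsto (fun n => |b2 n - r ^ 2|) atTop (nhds 0) := by
        have := tendsto_iff_norm_sub_tendsto_zero.mp hb2
        simpa [Real.norm_eq_abs] using this
      have := (((h1.const_mul p').add (h2.const_mul q')).mul_const |L|)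
      simpa using this
    have hC : Tendsto (fun n => p' * b1 n + q' * b2 n) atTop (nhds c) := by
      have := (hb1.const_mul p').add (hb2.const_mul q')
      simpa [hcdef] using this
    have eA : ∀ᶠ n in atTop, |a n - muU| < ε / 2 :=
      hA.eventually_lt_const (by positivity)
    have eB : ∀ᶠ n in atTop, (p' * |b1 n - r| + q' * |b2 n - r ^ 2|) * |L| < ε / 2 :=
      hB.eventually_lt_const (by positivity)
    have eC : ∀ᶠ n in atTop, p' * b1 n + q' * b2 n < c' :=
      hC.eventually_lt_const hcc'
    obtain ⟨N, hN⟩ := (((eA.and eB).and eC).and (eventually_ge_atTop 2)).exists_forall_of_atTop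
    refine ⟨N, fun n hn => ?_⟩
    obtain ⟨⟨⟨hAn, hBn⟩, hCn⟩, hn2⟩ := hN n hn
    have hid : x n - L = (a n - muU) + p' * b1 n * (x (n - 1) - L)
        + q' * b2 n * (x (n - 2) - L) + (p' * (b1 n - r) + q' * (b2 n - r ^ 2)) * L := by
      rw [hxrec n hn2]
      rw [hmuL]
      ring
    have hgn : g n = |x n - L| := rfl
    have hgn1 : g (n - 1) = |x (n - 1) - L| := rfl
    have hgn2 : g (n - 2) = |x (n - 2) - L| := rfl
    have habs : g n ≤ |a n - muU| + p' * b1 n * g (n - 1) + q' * b2 n * g (n - 2)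
        + (p' * |b1 n - r| + q' * |b2 n - r ^ 2|) * |L| := by
      rw [hgn, hgn1, hgn2, hid]
      calc |(a n - muU) + p' * b1 n * (x (n - 1) - L) + q' * b2 n * (x (n - 2) - L)
            + (p' * (b1 n - r) + q' * (b2 n - r ^ 2)) * L|
          ≤ |(a n - muU) + p' * b1 n * (x (n - 1) - L) + q' * b2 n * (x (n - 2) - L)|
            + |(p' * (b1 n - r) + q' * (b2 n - r ^ 2)) * L| := abs_add_le _ _
        _ ≤ (|a n - muU| + |p' * b1 n * (x (n - 1) - L)| + |q' * b2 n * (x (n - 2) - L)|)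
            + |(p' * (b1 n - r) + q' * (b2 n - r ^ 2)) * L| := by
              gcongr
              exact abs_add_three _ _ _
        _ ≤ |a n - muU| + p' * b1 n * g (n - 1) + q' * b2 n * g (n - 2)
            + (p' * |b1 n - r| + q' * |b2 n - r ^ 2|) * |L| := by
              have e1 : |p' * b1 n * (x (n - 1) - L)| = p' * b1 n * |x (n - 1) - L| := by
                rw [abs_mul, abs_of_nonneg (mul_nonneg hp' (hb1nn n))]
              have e2 : |q' * b2 n * (x (n - 2) - L)| = q' * b2 n * |x (n - 2) - L| := by
                rw [abs_mul, abs_of_nonneg (mul_nonneg hq' (hb2nn n))]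
              have e3 : |(p' * (b1 n - r) + q' * (b2 n - r ^ 2)) * L|
                  ≤ (p' * |b1 n - r| + q' * |b2 n - r ^ 2|) * |L| := by
                rw [abs_mul]
                gcongr
                calc |p' * (b1 n - r) + q' * (b2 n - r ^ 2)|
                    ≤ |p' * (b1 n - r)| + |q' * (b2 n - r ^ 2)| := abs_add_le _ _
                  _ = p' * |b1 n - r| + q' * |b2 n - r ^ 2| := by
                      rw [abs_mul, abs_mul, abs_of_nonneg hp', abs_of_nonneg hq']
              rw [e1, e2]
              linarith
    have hmax : p' * b1 n * g (n - 1) + q' * b2 n * g (n - 2)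
        ≤ c' * max (g (n - 1)) (g (n - 2)) := by
      have m1 : g (n - 1) ≤ max (g (n - 1)) (g (n - 2)) := le_max_left _ _
      have m2 : g (n - 2) ≤ max (g (n - 1)) (g (n - 2)) := le_max_right _ _
      have hmnn : 0 ≤ max (g (n - 1)) (g (n - 2)) := le_trans (hg0 _) m1
      have hp1 : 0 ≤ p' * b1 n := mul_nonneg hp' (hb1nn n)
      have hq2 : 0 ≤ q' * b2 n := mul_nonneg hq' (hb2nn n)
      nlinarith [mul_le_mul_of_nonneg_left m1 hp1, mul_le_mul_of_nonneg_left m2 hq2,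
        mul_le_mul_of_nonneg_right hCn.le hmnn]
    linarith
  have hgto : Tendsto g atTop (nhds 0) :=
    aux_decay_13 g hg0 (1 + |L|) hgM c' hc'0 hc'1 hgkey
  have hxto : Tendsto x atTop (nhds L) := by
    rw [tendsto_iff_norm_sub_tendsto_zero]
    have hfun : (fun n => ‖x n - L‖) = g := by
      funext n
      rw [Real.norm_eq_abs]
    rw [hfun]
    exact hgto
  have : muU / (1 - p' * r - q' * r ^ 2) = L := by
    rw [hLdef, hcdef]
    ring
  rw [this]
  exact hxto
end

section
/- Let r ∈ (0,1) and let (f_n), (u_n), (w_n) be sequences of nonnegative reals with f_n > 0, 0 ≤ u_n, w_n ≤ f_n, satisfying w_0 = u_0 and w_n = u_n + α·w_{n-1} + ∑_{k=0}^{n-1} c_k·w_{n-k-1} for n ≥ 1, where α ≥ 0, c_k ≥ 0 for all k, u_0 > 0, and ∑_{k=0}^∞ c_k·r^{k+1} converges. If ∑_{n=0}^{∞} u_n·r^{n+1} converges, and α·r + ∑_{k=0}^∞ c_k r^{k+1} < 1 (evaluated appropriately), then ∑_{n=0}^{∞} w_n·r^{n+1} converges. -/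
/-! Weighting by `r ^ (n + 1)` turns the recurrence for `w` into the same recurrence with `α`
replaced by `α * r` and `c k` by `c k * r ^ (k + 1)`. For nonnegative terms the convolution part
of the first `N` partial sums is at most `(∑ c k r ^ (k + 1)) * S N`, where `S N` is the `N`-th
partial sum of the weighted `w`; hence
`S N ≤ ∑ u n r ^ (n + 1) + (α r + ∑ c k r ^ (k + 1)) * S N`, and the
smallness condition bounds `S N` uniformly. -/

open Finset

theorem sum_range_convolution_le_mul {a b : ℕ → ℝ} (ha : ∀ k, 0 ≤ a k) (hb : ∀ n, 0 ≤ b n)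
    (N : ℕ) :
    ∑ n ∈ range N, ∑ k ∈ range (n + 1), a k * b (n - k) ≤
      (∑ k ∈ range N, a k) * ∑ n ∈ range N, b n := by
  rw [sum_range_diag_flip N fun k m => a k * b m, sum_mul]
  gcongr with k
  rw [← mul_sum]
  gcongr
  · exact ha k
  · exact fun n _ _ => hb n
  · exact Nat.sub_le N k

theorem summable_of_le_linear_add_convolution {a b g : ℕ → ℝ} {q : ℝ}
    (ha : ∀ k, 0 ≤ a k) (hb : ∀ n, 0 ≤ b n) (hg : ∀ n, 0 ≤ g n) (hq : 0 ≤ q)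
    (ha_sum : Summable a) (hg_sum : Summable g) (h0 : b 0 ≤ g 0)
    (hstep : ∀ n, b (n + 1) ≤ g (n + 1) + q * b n + ∑ k ∈ range (n + 1), a k * b (n - k))
    (hsmall : q + ∑' k, a k < 1) :
    Summable b := by
  set A := ∑' k, a k
  set G := ∑' n, g n
  set S : ℕ → ℝ := fun N => ∑ n ∈ range N, b n
  have hS_nonneg : ∀ N, 0 ≤ S N := fun N => sum_nonneg fun n _ => hb n
  have hS_succ : ∀ N, S N ≤ S (N + 1) := fun N => by
    simpa only [S, sum_range_succ] using le_add_of_nonneg_right (hb N)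
  have hA_partial : ∀ N, ∑ k ∈ range N, a k ≤ A := fun N =>
    ha_sum.sum_le_tsum _ fun k _ => ha k
  have hS_le : ∀ N, S N ≤ G + (q + A) * S N := by
    rintro (_ | N)
    · simpa [S] using tsum_nonneg hg
    have hconv := sum_range_convolution_le_mul ha hb N
    calc S (N + 1) = b 0 + ∑ n ∈ range N, b (n + 1) := (sum_range_succ' b N).trans (add_comm _ _)
      _ ≤ g 0 + ∑ n ∈ range N, (g (n + 1) + q * b n + ∑ k ∈ range (n + 1), a k * b (n - k)) :=
          add_le_add h0 (sum_le_sum fun n _ => hstep n)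
      _ = ∑ n ∈ range (N + 1), g n + q * S N +
            ∑ n ∈ range N, ∑ k ∈ range (n + 1), a k * b (n - k) := by
          rw [sum_range_succ' g N, sum_add_distrib, sum_add_distrib, ← mul_sum]
          ring
      _ ≤ G + q * S (N + 1) + A * S (N + 1) := by
          gcongr
          · exact hg_sum.sum_le_tsum _ fun n _ => hg n
          · exact hS_succ N
          · exact hconv.trans (mul_le_mul (hA_partial N) (hS_succ N) (hS_nonneg N)
              (tsum_nonneg ha))
      _ = G + (q + A) * S (N + 1) := by ring
  refine summable_of_sum_range_le (c := G / (1 - (q + A))) hb fun N => ?_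
  rw [le_div_iff₀ (by linarith)]
  nlinarith [hS_le N]

theorem weighted_recurrence {u w c : ℕ → ℝ} {α : ℝ}
    (hwrec : ∀ n : ℕ, w (n + 1) = u (n + 1) + α * w n +
      ∑ k ∈ range (n + 1), c k * w (n - k)) (r : ℝ) (n : ℕ) :
    w (n + 1) * r ^ (n + 1 + 1) = u (n + 1) * r ^ (n + 1 + 1) + α * r * (w n * r ^ (n + 1)) +
      ∑ k ∈ range (n + 1), c k * r ^ (k + 1) * (w (n - k) * r ^ (n - k + 1)) := by
  have hpow : ∀ k ∈ range (n + 1), r ^ (n + 1 + 1) = r ^ (k + 1) * r ^ (n - k + 1) := by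
    intro k hk
    rw [← pow_add]
    congr 1
    have := mem_range.1 hk
    omega
  rw [hwrec n, add_mul, add_mul, sum_mul, sum_congr rfl fun k hk => by rw [hpow k hk]]
  congr 1
  · ring
  · exact sum_congr rfl fun k _ => by ring

theorem stmt_19_general (r : ℝ) (hr : r ∈ Set.Ioo (0 : ℝ) 1)
    (f u w c : ℕ → ℝ)
    (hu : ∀ n, 0 ≤ u n ∧ u n ≤ f n) (hwb : ∀ n, 0 ≤ w n ∧ w n ≤ f n)
    (α : ℝ) (hα : 0 ≤ α) (hc : ∀ k, 0 ≤ c k)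
    (hw0 : w 0 = u 0)
    (hwrec : ∀ n : ℕ, w (n + 1) = u (n + 1) + α * w n +
      ∑ k ∈ Finset.range (n + 1), c k * w (n - k))
    (hcsum : Summable (fun k : ℕ => c k * r ^ (k + 1)))
    (husum : Summable (fun n : ℕ => u n * r ^ (n + 1)))
    (hsmall : α * r + (∑' k : ℕ, c k * r ^ (k + 1)) < 1) :
    Summable (fun n : ℕ => w n * r ^ (n + 1)) := by
  have hr0 : 0 ≤ r := hr.1.le
  refine summable_of_le_linear_add_convolution (q := α * r)
    (fun k => mul_nonneg (hc k) (by positivity)) (fun n => mul_nonneg (hwb n).1 (by positivity))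
    (fun n => mul_nonneg (hu n).1 (by positivity)) (by positivity) hcsum husum
    (by rw [hw0]) (fun n => (weighted_recurrence hwrec r n).le) hsmall

theorem stmt_19 (r : ℝ) (hr : r ∈ Set.Ioo (0 : ℝ) 1)
    (f u w c : ℕ → ℝ)
    (hfpos : ∀ n, 0 < f n)
    (hu : ∀ n, 0 ≤ u n ∧ u n ≤ f n) (hwb : ∀ n, 0 ≤ w n ∧ w n ≤ f n)
    (α : ℝ) (hα : 0 ≤ α) (hc : ∀ k, 0 ≤ c k)
    (hu0 : 0 < u 0)
    (hw0 : w 0 = u 0)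
    (hwrec : ∀ n : ℕ, w (n + 1) = u (n + 1) + α * w n +
      ∑ k ∈ Finset.range (n + 1), c k * w (n - k))
    (hcsum : Summable (fun k : ℕ => c k * r ^ (k + 1)))
    (husum : Summable (fun n : ℕ => u n * r ^ (n + 1)))
    (hsmall : α * r + (∑' k : ℕ, c k * r ^ (k + 1)) < 1) :
    Summable (fun n : ℕ => w n * r ^ (n + 1)) :=
  stmt_19_general r hr f u w c hu hwb α hα hc hw0 hwrec hcsum husum hsmall
end
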